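/- Let α > 0. If g ∈ C[-1,1] and f = T_α^{-1} g, i.e. f(t) = (1-t²)^{-α/2} g(t) − α t ∫₀ᵗ g(s)(1-s²)^{-(α+2)/2} ds, then lim_{s→±1} f(s)(1-s²)^{α/2} = 0 and the limits lim_{s→±1} ∫₀ˢ f(t)(1-t²)^{(α-2)/2} dt exist and are finite. In other words, T_α^{-1} maps C[-1,1] into the class D^α. -/

import Mathlib

/-- The inverse transform
`(T_α⁻¹ g)(t) = (1-t²)^{-α/2} g(t) - α t ∫₀ᵗ g(s)(1-s²)^{-(α+2)/2} ds`. -/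
noncomputable def Tinv (α : ℝ) (g : ℝ → ℝ) (t : ℝ) : ℝ :=
  (1 - t ^ 2) ^ (-α / 2) * g t - α * t * ∫ s in (0 : ℝ)..t, g s * (1 - s ^ 2) ^ (-(α + 2) / 2)

/-- Membership in the class `D^α` (for `α > 0`): `f` is continuous on `(-1,1)`,
`f(s)(1-s²)^{α/2} → 0` as `s → ±1`, and `∫₀ˢ f(t)(1-t²)^{(α-2)/2} dt` has a finite limit
as `s → ±1`. -/
def MemD (α : ℝ) (f : ℝ → ℝ) : Prop :=
  ContinuousOn f (Set.Ioo (-1) 1) ∧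
  Filter.Tendsto (fun s => f s * (1 - s ^ 2) ^ (α / 2)) (nhdsWithin 1 (Set.Iio 1)) (nhds 0) ∧
  Filter.Tendsto (fun s => f s * (1 - s ^ 2) ^ (α / 2))
    (nhdsWithin (-1) (Set.Ioi (-1))) (nhds 0) ∧
  (∃ L : ℝ, Filter.Tendsto (fun s => ∫ t in (0 : ℝ)..s, f t * (1 - t ^ 2) ^ ((α - 2) / 2))
    (nhdsWithin 1 (Set.Iio 1)) (nhds L)) ∧
  (∃ L : ℝ, Filter.Tendsto (fun s => ∫ t in (0 : ℝ)..s, f t * (1 - t ^ 2) ^ ((α - 2) / 2))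
    (nhdsWithin (-1) (Set.Ioi (-1))) (nhds L))

open Real Filter Set MeasureTheory intervalIntegral

namespace Stmt7Aux

/-- `G α g s = ∫₀ˢ g(t)(1-t²)^{-(α+2)/2} dt`. -/
noncomputable def G (α : ℝ) (g : ℝ → ℝ) (s : ℝ) : ℝ :=
  ∫ t in (0 : ℝ)..s, g t * (1 - t ^ 2) ^ (-(α + 2) / 2)

lemma sq_pos' {s : ℝ} (hs : s ∈ Set.Ioo (-1:ℝ) 1) : 0 < 1 - s ^ 2 := by
  nlinarith [hs.1, hs.2]

lemma zero_mem : (0:ℝ) ∈ Set.Ioo (-1:ℝ) 1 := by norm_num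

lemma uIcc_sub {a b : ℝ} (ha : a ∈ Set.Ioo (-1:ℝ) 1) (hb : b ∈ Set.Ioo (-1:ℝ) 1) :
    Set.uIcc a b ⊆ Set.Ioo (-1:ℝ) 1 := by
  intro t ht
  rw [Set.mem_uIcc] at ht
  obtain h | h := ht <;>
    exact ⟨by linarith [ha.1, hb.1, h.1, h.2], by linarith [ha.2, hb.2, h.1, h.2]⟩

lemma contW (a : ℝ) : ContinuousOn (fun t : ℝ => (1 - t ^ 2) ^ a) (Set.Ioo (-1:ℝ) 1) := by
  apply ContinuousOn.rpow_const
  · exact (continuous_const.sub (continuous_pow 2)).continuousOn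
  · intro t ht; exact Or.inl (sq_pos' ht).ne'

lemma contIntegrand (α : ℝ) {g : ℝ → ℝ} (hg : ContinuousOn g (Set.Icc (-1) 1)) :
    ContinuousOn (fun t => g t * (1 - t ^ 2) ^ (-(α + 2) / 2)) (Set.Ioo (-1:ℝ) 1) :=
  (hg.mono Set.Ioo_subset_Icc_self).mul (contW _)

lemma intble {h : ℝ → ℝ} (hc : ContinuousOn h (Set.Ioo (-1:ℝ) 1))
    {a b : ℝ} (ha : a ∈ Set.Ioo (-1:ℝ) 1) (hb : b ∈ Set.Ioo (-1:ℝ) 1) :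
    IntervalIntegrable h MeasureTheory.volume a b :=
  (hc.mono (uIcc_sub ha hb)).intervalIntegrable

lemma hasDerivAt_G (α : ℝ) {g : ℝ → ℝ} (hg : ContinuousOn g (Set.Icc (-1) 1))
    {s : ℝ} (hs : s ∈ Set.Ioo (-1:ℝ) 1) :
    HasDerivAt (G α g) (g s * (1 - s ^ 2) ^ (-(α + 2) / 2)) s :=
  intervalIntegral.integral_hasDerivAt_right
    (intble (contIntegrand α hg) zero_mem hs)
    (ContinuousOn.stronglyMeasurableAtFilter isOpen_Ioo (contIntegrand α hg) s hs)
    ((contIntegrand α hg).continuousAt (isOpen_Ioo.mem_nhds hs))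

lemma hasDerivAt_F (α : ℝ) {t : ℝ} (ht : 0 < 1 - t ^ 2) :
    HasDerivAt (fun u : ℝ => (1 - u ^ 2) ^ (-α / 2))
      (α * t * (1 - t ^ 2) ^ (-(α + 2) / 2)) t := by
  have h1 : HasDerivAt (fun u : ℝ => 1 - u ^ 2) (-(2 * t)) t := by
    simpa using ((hasDerivAt_pow 2 t).const_sub 1)
  have h2 := (Real.hasDerivAt_rpow_const (x := 1 - t ^ 2) (p := -α / 2)
    (Or.inl ht.ne')).comp t h1
  refine h2.congr_deriv ?_
  rw [show -α / 2 - 1 = -(α + 2) / 2 by ring]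
  ring

lemma hasDerivAt_P (α : ℝ) {t : ℝ} (ht : 0 < 1 - t ^ 2) :
    HasDerivAt (fun u : ℝ => (1 - u ^ 2) ^ (α / 2))
      (-(α * t) * (1 - t ^ 2) ^ ((α - 2) / 2)) t := by
  have h1 : HasDerivAt (fun u : ℝ => 1 - u ^ 2) (-(2 * t)) t := by
    simpa using ((hasDerivAt_pow 2 t).const_sub 1)
  have h2 := (Real.hasDerivAt_rpow_const (x := 1 - t ^ 2) (p := α / 2)
    (Or.inl ht.ne')).comp t h1
  refine h2.congr_deriv ?_
  rw [show α / 2 - 1 = (α - 2) / 2 by ring]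
  ring

lemma integral_tw (α : ℝ) {a b : ℝ} (ha : a ∈ Set.Ioo (-1:ℝ) 1) (hb : b ∈ Set.Ioo (-1:ℝ) 1) :
    ∫ t in a..b, α * t * (1 - t ^ 2) ^ (-(α + 2) / 2)
      = (1 - b ^ 2) ^ (-α / 2) - (1 - a ^ 2) ^ (-α / 2) := by
  apply intervalIntegral.integral_eq_sub_of_hasDerivAt
  · intro t ht
    exact hasDerivAt_F α (sq_pos' (uIcc_sub ha hb ht))
  · exact intble (((continuous_const.mul continuous_id).continuousOn).mul (contW _)) ha hb

lemma keyLimit (α : ℝ) (hα : 0 < α) (g : ℝ → ℝ) (hg : ContinuousOn g (Set.Icc (-1) 1)) :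
    Filter.Tendsto (fun s => (1 - s ^ 2) ^ (α / 2) * G α g s)
      (nhdsWithin 1 (Set.Iio 1)) (nhds (g 1 / α)) := by
  rw [Metric.tendsto_nhds]
  intro ε hε
  set c := g 1 with hc
  have hgt : Tendsto g (nhdsWithin 1 (Set.Iio 1)) (nhds c) := by
    have h := (hg 1 (by norm_num)).tendsto
    rw [← nhdsWithin_Ico_eq_nhdsLT (show (-1:ℝ) < 1 by norm_num)]
    exact h.mono_left (nhdsWithin_mono _ Set.Ico_subset_Icc_self)
  obtain ⟨δ, hδpos, hδ⟩ := Metric.tendsto_nhdsWithin_nhds.mp hgt (α * ε / 32) (by positivity)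
  set s₀ : ℝ := max (max (3/4) (1 - δ/2)) (1 - (α * ε / 32)/(|c|+1)) with hs₀def
  have hs₀34 : (3:ℝ)/4 ≤ s₀ := le_max_of_le_left (le_max_left _ _)
  have hcpos : (0:ℝ) < |c| + 1 := by positivity
  have hs₀lt1 : s₀ < 1 := by
    apply max_lt (max_lt (by norm_num) (by linarith))
    have : 0 < (α * ε / 32)/(|c|+1) := by positivity
    linarith
  have hs₀mem : s₀ ∈ Set.Ioo (-1:ℝ) 1 := ⟨by linarith, hs₀lt1⟩
  have hpt : ∀ t, s₀ ≤ t → t < 1 → |g t - c * t| ≤ α * (ε/4) * t := by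
    intro t ht1 ht2
    have h1 : |g t - c| < α * ε / 32 := by
      have hd : 1 - δ/2 ≤ s₀ := le_max_of_le_left (le_max_right _ _)
      apply hδ (show t ∈ Set.Iio (1:ℝ) from ht2)
      rw [Real.dist_eq, abs_of_nonpos (by linarith)]
      linarith
    have h2 : |c| * (1 - t) ≤ α * ε / 32 := by
      have h3 : 1 - (α*ε/32)/(|c|+1) ≤ s₀ := le_max_right _ _
      have h4 : 1 - t ≤ (α*ε/32)/(|c|+1) := by linarith
      have h5 : |c| * (1 - t) ≤ (|c|+1) * ((α*ε/32)/(|c|+1)) :=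
        mul_le_mul (by linarith [abs_nonneg c]) h4 (by linarith) (by positivity)
      rwa [mul_div_cancel₀ _ hcpos.ne'] at h5
    have h6 : |g t - c * t| ≤ |g t - c| + |c - c * t| := abs_sub_le _ _ _
    have h7 : |c - c * t| = |c| * (1 - t) := by
      rw [show c - c * t = c * (1 - t) by ring, abs_mul,
        abs_of_nonneg (by linarith : (0:ℝ) ≤ 1 - t)]
    nlinarith [mul_nonneg (mul_nonneg hα.le hε.le) (show (0:ℝ) ≤ t - 3/4 by linarith)]
  -- ψ and its limit
  have hP0 : Tendsto (fun s : ℝ => (1 - s ^ 2) ^ (α/2)) (nhdsWithin 1 (Set.Iio 1)) (nhds 0) := by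
    have h1 : Tendsto (fun s : ℝ => 1 - s ^ 2) (nhdsWithin 1 (Set.Iio 1)) (nhds 0) := by
      apply tendsto_nhdsWithin_of_tendsto_nhds
      have := ((continuous_const (y := (1:ℝ))).sub (continuous_pow 2)).tendsto (1:ℝ)
      simpa [Pi.sub_def] using this
    have h2 := h1.rpow_const (p := α/2) (Or.inr (by positivity))
    simpa [Real.zero_rpow (show α/2 ≠ 0 by positivity)] using h2
  have hψlim : Tendsto (fun s : ℝ => (1 - s ^ 2) ^ (α/2) * G α g s₀
      + (c/α) * (1 - (1 - s₀ ^ 2) ^ (-α/2) * (1 - s ^ 2) ^ (α/2)))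
      (nhdsWithin 1 (Set.Iio 1)) (nhds (c/α)) := by
    have h1 : Tendsto (fun s : ℝ => (1 - s ^ 2) ^ (α/2) * G α g s₀
        + (c/α) * (1 - (1 - s₀ ^ 2) ^ (-α/2) * (1 - s ^ 2) ^ (α/2)))
        (nhdsWithin 1 (Set.Iio 1))
        (nhds (0 * G α g s₀ + (c/α) * (1 - (1 - s₀ ^ 2) ^ (-α/2) * 0))) := by
      exact (hP0.mul tendsto_const_nhds).add
        ((tendsto_const_nhds.sub (tendsto_const_nhds.mul hP0)).const_mul _)
    simpa using h1
  have hev1 := (Metric.tendsto_nhds.mp hψlim) (ε/2) (by positivity)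
  have hev2 : Set.Ioo s₀ 1 ∈ nhdsWithin (1:ℝ) (Set.Iio 1) := Ioo_mem_nhdsLT hs₀lt1
  filter_upwards [hev1, hev2] with s hs1 hs2
  obtain ⟨hs₀s, hslt1⟩ := hs2
  have hsmem : s ∈ Set.Ioo (-1:ℝ) 1 := ⟨by linarith, hslt1⟩
  have hposs : (0:ℝ) < 1 - s ^ 2 := sq_pos' hsmem
  have hpos0 : (0:ℝ) < 1 - s₀ ^ 2 := sq_pos' hs₀mem
  -- integrabilities on s₀..s
  have hmemIcc : ∀ t ∈ Set.Icc s₀ s, t ∈ Set.Ioo (-1:ℝ) 1 := fun t ht =>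
    ⟨by linarith [ht.1, hs₀mem.1], lt_of_le_of_lt ht.2 hslt1⟩
  have hgw_int : IntervalIntegrable (fun t => g t * (1 - t ^ 2) ^ (-(α + 2) / 2))
      volume s₀ s := intble (contIntegrand α hg) hs₀mem hsmem
  have hdiff_cont : ContinuousOn (fun t => (g t - c * t) * (1 - t ^ 2) ^ (-(α + 2) / 2))
      (Set.Ioo (-1:ℝ) 1) :=
    ((hg.mono Set.Ioo_subset_Icc_self).sub
      ((continuous_const.mul continuous_id).continuousOn)).mul (contW _)
  have hdiff_int : IntervalIntegrable (fun t => (g t - c * t) * (1 - t ^ 2) ^ (-(α + 2) / 2))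
      volume s₀ s := intble hdiff_cont hs₀mem hsmem
  have hctw_int : IntervalIntegrable (fun t => c * t * (1 - t ^ 2) ^ (-(α + 2) / 2))
      volume s₀ s :=
    intble (((continuous_const.mul continuous_id).continuousOn).mul (contW _)) hs₀mem hsmem
  -- computations
  have hB : ∫ t in s₀..s, c * t * (1 - t ^ 2) ^ (-(α + 2) / 2)
      = (c/α) * ((1 - s ^ 2) ^ (-α/2) - (1 - s₀ ^ 2) ^ (-α/2)) := by
    have h1 : (fun t : ℝ => c * t * (1 - t ^ 2) ^ (-(α + 2) / 2))
        = fun t : ℝ => (c/α) * (α * t * (1 - t ^ 2) ^ (-(α + 2) / 2)) := by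
      funext t; field_simp
    rw [h1, intervalIntegral.integral_const_mul, integral_tw α hs₀mem hsmem]
  have hGsplit : G α g s = G α g s₀ + ∫ t in s₀..s, g t * (1 - t ^ 2) ^ (-(α + 2) / 2) :=
    (intervalIntegral.integral_add_adjacent_intervals
      (intble (contIntegrand α hg) zero_mem hs₀mem) hgw_int).symm
  have hAsplit : (∫ t in s₀..s, g t * (1 - t ^ 2) ^ (-(α + 2) / 2))
      = (∫ t in s₀..s, (g t - c * t) * (1 - t ^ 2) ^ (-(α + 2) / 2))
        + ∫ t in s₀..s, c * t * (1 - t ^ 2) ^ (-(α + 2) / 2) := by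
    rw [← intervalIntegral.integral_add hdiff_int hctw_int]
    apply intervalIntegral.integral_congr
    intro t _; ring
  set D := ∫ t in s₀..s, (g t - c * t) * (1 - t ^ 2) ^ (-(α + 2) / 2) with hD
  have hDbound : |D| ≤ (ε/4) * ((1 - s ^ 2) ^ (-α/2) - (1 - s₀ ^ 2) ^ (-α/2)) := by
    have h1 := intervalIntegral.abs_integral_le_integral_abs (μ := volume)
      (f := fun t => (g t - c * t) * (1 - t ^ 2) ^ (-(α + 2) / 2)) hs₀s.le
    have h2 : (∫ t in s₀..s, |(g t - c * t) * (1 - t ^ 2) ^ (-(α + 2) / 2)|)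
        ≤ ∫ t in s₀..s, (ε/4) * (α * t * (1 - t ^ 2) ^ (-(α + 2) / 2)) := by
      apply intervalIntegral.integral_mono_on hs₀s.le
      · exact (intble hdiff_cont.abs hs₀mem hsmem)
      · exact intble (continuousOn_const.mul
          (((continuous_const.mul continuous_id).continuousOn).mul (contW _))) hs₀mem hsmem
      · intro t ht
        have htm := hmemIcc t ht
        have htpos := sq_pos' htm
        have hwnn : (0:ℝ) ≤ (1 - t ^ 2) ^ (-(α + 2) / 2) := Real.rpow_nonneg htpos.le _
        rw [abs_mul, abs_of_nonneg hwnn]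
        have := hpt t ht.1 htm.2
        nlinarith [abs_nonneg (g t - c * t)]
    have h3 : (∫ t in s₀..s, (ε/4) * (α * t * (1 - t ^ 2) ^ (-(α + 2) / 2)))
        = (ε/4) * ((1 - s ^ 2) ^ (-α/2) - (1 - s₀ ^ 2) ^ (-α/2)) := by
      rw [intervalIntegral.integral_const_mul, integral_tw α hs₀mem hsmem]
    calc |D| ≤ _ := h1
      _ ≤ _ := h2
      _ = _ := h3
  have hPF : (1 - s ^ 2) ^ (α/2) * (1 - s ^ 2) ^ (-α/2) = 1 := by
    rw [← Real.rpow_add hposs, show α/2 + -α/2 = 0 by ring, Real.rpow_zero]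
  have hexp : (1 - s ^ 2) ^ (α/2) * G α g s
      = ((1 - s ^ 2) ^ (α/2) * G α g s₀
          + (c/α) * (1 - (1 - s₀ ^ 2) ^ (-α/2) * (1 - s ^ 2) ^ (α/2)))
        + (1 - s ^ 2) ^ (α/2) * D := by
    have h1 : (1 - s ^ 2) ^ (α/2) * G α g s
        = (1 - s ^ 2) ^ (α/2) * G α g s₀ + (1 - s ^ 2) ^ (α/2) * D
          + (c/α) * ((1 - s ^ 2) ^ (α/2) * (1 - s ^ 2) ^ (-α/2))
          - (c/α) * ((1 - s₀ ^ 2) ^ (-α/2) * (1 - s ^ 2) ^ (α/2)) := by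
      rw [hGsplit, hAsplit, hB]; ring
    rw [hPF] at h1
    rw [h1]; ring
  have hs1' : dist ((1 - s ^ 2) ^ (α/2) * G α g s₀
      + (c/α) * (1 - (1 - s₀ ^ 2) ^ (-α/2) * (1 - s ^ 2) ^ (α/2))) (c/α) < ε/2 := hs1
  have hPnn : (0:ℝ) ≤ (1 - s ^ 2) ^ (α/2) := Real.rpow_nonneg hposs.le _
  have hF0nn : (0:ℝ) ≤ (1 - s₀ ^ 2) ^ (-α/2) := Real.rpow_nonneg hpos0.le _
  rw [Real.dist_eq] at hs1' ⊢
  have htri : |(1 - s ^ 2) ^ (α/2) * G α g s - c/α|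
      ≤ |(1 - s ^ 2) ^ (α/2) * G α g s₀
          + (c/α) * (1 - (1 - s₀ ^ 2) ^ (-α/2) * (1 - s ^ 2) ^ (α/2)) - c/α|
        + |(1 - s ^ 2) ^ (α/2) * D| := by
    rw [hexp]
    exact (abs_add_le _ _).trans_eq' (by ring_nf)
  have hPD : |(1 - s ^ 2) ^ (α/2) * D| ≤ ε/4 := by
    rw [abs_mul, abs_of_nonneg hPnn]
    nlinarith [mul_le_mul_of_nonneg_left hDbound hPnn, mul_nonneg hPnn hF0nn]
  linarith

lemma tinv_cont (α : ℝ) {g : ℝ → ℝ} (hg : ContinuousOn g (Set.Icc (-1) 1)) :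
    ContinuousOn (Tinv α g) (Set.Ioo (-1:ℝ) 1) := by
  have h1 : Tinv α g = fun s => (1 - s ^ 2) ^ (-α / 2) * g s - α * s * G α g s := rfl
  rw [h1]
  apply ContinuousOn.sub
  · exact (contW _).mul (hg.mono Set.Ioo_subset_Icc_self)
  · apply ContinuousOn.mul
    · exact (continuous_const.mul continuous_id).continuousOn
    · intro s hs
      exact ((hasDerivAt_G α hg hs).continuousAt).continuousWithinAt

lemma f_mul_P (α : ℝ) (g : ℝ → ℝ) {s : ℝ} (hs : s ∈ Set.Ioo (-1:ℝ) 1) :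
    Tinv α g s * (1 - s ^ 2) ^ (α / 2)
      = g s - α * s * ((1 - s ^ 2) ^ (α / 2) * G α g s) := by
  have hp := sq_pos' hs
  have hFP : (1 - s ^ 2:ℝ) ^ (-α / 2) * (1 - s ^ 2) ^ (α / 2) = 1 := by
    rw [← Real.rpow_add hp, show -α / 2 + α / 2 = 0 by ring, Real.rpow_zero]
  have hT : Tinv α g s = (1 - s ^ 2) ^ (-α / 2) * g s - α * s * G α g s := rfl
  rw [hT]
  linear_combination (g s) * hFP

lemma primitive_eq (α : ℝ) {g : ℝ → ℝ} (hg : ContinuousOn g (Set.Icc (-1) 1))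
    {s : ℝ} (hs : s ∈ Set.Ioo (-1:ℝ) 1) :
    ∫ t in (0:ℝ)..s, Tinv α g t * (1 - t ^ 2) ^ ((α - 2) / 2)
      = (1 - s ^ 2) ^ (α / 2) * G α g s := by
  have husub := uIcc_sub zero_mem hs
  have hderiv : ∀ t ∈ Set.uIcc (0:ℝ) s,
      HasDerivAt (fun u => (1 - u ^ 2) ^ (α / 2) * G α g u)
        (Tinv α g t * (1 - t ^ 2) ^ ((α - 2) / 2)) t := by
    intro t ht
    have htm := husub ht
    have htp := sq_pos' htm
    have h1 := (hasDerivAt_P α htp).mul (hasDerivAt_G α hg htm)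
    refine h1.congr_deriv ?_
    have e1 : (1 - t ^ 2:ℝ) ^ (α / 2) * (1 - t ^ 2) ^ (-(α + 2) / 2)
        = (1 - t ^ 2) ^ (-(1:ℝ)) := by
      rw [← Real.rpow_add htp]; congr 1; ring
    have e2 : (1 - t ^ 2:ℝ) ^ (-α / 2) * (1 - t ^ 2) ^ ((α - 2) / 2)
        = (1 - t ^ 2) ^ (-(1:ℝ)) := by
      rw [← Real.rpow_add htp]; congr 1; ring
    have hT : Tinv α g t = (1 - t ^ 2) ^ (-α / 2) * g t - α * t * G α g t := rfl
    rw [hT]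
    linear_combination (g t) * e1 - (g t) * e2
  have hint : IntervalIntegrable (fun t => Tinv α g t * (1 - t ^ 2) ^ ((α - 2) / 2))
      volume 0 s := intble ((tinv_cont α hg).mul (contW _)) zero_mem hs
  rw [intervalIntegral.integral_eq_sub_of_hasDerivAt hderiv hint]
  simp [G]

lemma G_neg (α : ℝ) (g : ℝ → ℝ) (s : ℝ) :
    G α (fun t => g (-t)) (-s) = - G α g s := by
  have h1 : G α (fun t => g (-t)) (-s)
      = ∫ x in (0:ℝ)..(-s), (fun t => g t * (1 - t ^ 2) ^ (-(α + 2) / 2)) (-x) := by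
    apply intervalIntegral.integral_congr
    intro x _
    simp [neg_sq]
  rw [h1, intervalIntegral.integral_comp_neg (fun t => g t * (1 - t ^ 2) ^ (-(α + 2) / 2))]
  simp [G, ← intervalIntegral.integral_symm]

lemma keyLimitNeg (α : ℝ) (hα : 0 < α) (g : ℝ → ℝ) (hg : ContinuousOn g (Set.Icc (-1) 1)) :
    Filter.Tendsto (fun s => (1 - s ^ 2) ^ (α / 2) * G α g s)
      (nhdsWithin (-1) (Set.Ioi (-1))) (nhds (-(g (-1)) / α)) := by
  have hgneg : ContinuousOn (fun t => g (-t)) (Set.Icc (-1:ℝ) 1) := by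
    apply hg.comp continuous_neg.continuousOn
    intro x hx
    simp only [Set.mem_Icc] at hx ⊢
    constructor <;> linarith [hx.1, hx.2]
  have h1 := keyLimit α hα _ hgneg
  have hmap : Tendsto (fun s : ℝ => -s) (nhdsWithin (-1) (Set.Ioi (-1)))
      (nhdsWithin 1 (Set.Iio 1)) := by
    rw [tendsto_nhdsWithin_iff]
    constructor
    · have : Tendsto (fun s : ℝ => -s) (nhds (-1:ℝ)) (nhds 1) := by
        simpa using (continuous_neg (G := ℝ)).tendsto (-1:ℝ)
      exact this.mono_left nhdsWithin_le_nhds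
    · filter_upwards [self_mem_nhdsWithin] with x hx
      simp only [Set.mem_Ioi] at hx
      simp only [Set.mem_Iio]
      linarith
  have h2 := h1.comp hmap
  have h3 : Tendsto (fun s => -((1 - s ^ 2) ^ (α / 2) * G α g s))
      (nhdsWithin (-1:ℝ) (Set.Ioi (-1))) (nhds (g (-1) / α)) := by
    apply h2.congr
    intro s
    simp only [Function.comp_apply, neg_sq, G_neg]
    ring
  have h4 := h3.neg
  simpa [neg_div] using h4

end Stmt7Aux

/-- For `α > 0`, the map `T_α⁻¹` sends `C[-1,1]` into the class `D^α`. -/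
theorem stmt_7 (α : ℝ) (hα : 0 < α) (g : ℝ → ℝ)
    (hg : ContinuousOn g (Set.Icc (-1) 1)) :
    MemD α (Tinv α g) := by
  open Stmt7Aux in
  have hIooIio : Set.Ioo (-1:ℝ) 1 ∈ nhdsWithin (1:ℝ) (Set.Iio 1) :=
    Ioo_mem_nhdsLT (by norm_num)
  have hIooIoi : Set.Ioo (-1:ℝ) 1 ∈ nhdsWithin (-1:ℝ) (Set.Ioi (-1)) :=
    Ioo_mem_nhdsGT (by norm_num)
  have hgt1 : Filter.Tendsto g (nhdsWithin 1 (Set.Iio 1)) (nhds (g 1)) := by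
    have h := (hg 1 (by norm_num)).tendsto
    rw [← nhdsWithin_Ico_eq_nhdsLT (show (-1:ℝ) < 1 by norm_num)]
    exact h.mono_left (nhdsWithin_mono _ Set.Ico_subset_Icc_self)
  have hgt2 : Filter.Tendsto g (nhdsWithin (-1) (Set.Ioi (-1))) (nhds (g (-1))) := by
    have h := (hg (-1) (by norm_num)).tendsto
    rw [← nhdsWithin_Ioc_eq_nhdsGT (show (-1:ℝ) < 1 by norm_num)]
    exact h.mono_left (nhdsWithin_mono _ Set.Ioc_subset_Icc_self)
  have hαs1 : Filter.Tendsto (fun s : ℝ => α * s) (nhdsWithin 1 (Set.Iio 1))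
      (nhds (α * 1)) :=
    ((continuous_const.mul continuous_id).tendsto 1).mono_left nhdsWithin_le_nhds
  have hαs2 : Filter.Tendsto (fun s : ℝ => α * s) (nhdsWithin (-1) (Set.Ioi (-1)))
      (nhds (α * (-1))) :=
    ((continuous_const.mul continuous_id).tendsto (-1)).mono_left nhdsWithin_le_nhds
  refine ⟨tinv_cont α hg, ?_, ?_, ⟨g 1 / α, ?_⟩, ⟨-(g (-1)) / α, ?_⟩⟩
  · have hmain := hgt1.sub (hαs1.mul (keyLimit α hα g hg))
    have h0 : g 1 - α * 1 * (g 1 / α) = 0 := by field_simp; ring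
    rw [h0] at hmain
    refine Filter.Tendsto.congr' ?_ hmain
    filter_upwards [hIooIio] with s hs
    exact (f_mul_P α g hs).symm
  · have hmain := hgt2.sub (hαs2.mul (keyLimitNeg α hα g hg))
    have h0 : g (-1) - α * (-1) * (-(g (-1)) / α) = 0 := by field_simp; ring
    rw [h0] at hmain
    refine Filter.Tendsto.congr' ?_ hmain
    filter_upwards [hIooIoi] with s hs
    exact (f_mul_P α g hs).symm
  · refine Filter.Tendsto.congr' ?_ (keyLimit α hα g hg)
    filter_upwards [hIooIio] with s hs
    exact (primitive_eq α hg hs).symm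
  · refine Filter.Tendsto.congr' ?_ (keyLimitNeg α hα g hg)
    filter_upwards [hIooIoi] with s hs
    exact (primitive_eq α hg hs).symm
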